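/- A permutation π of {1,...,n} (n ≥ 3) has its lexicographically first increasing triple at {1,2,r} if and only if π(2) is the second largest value among π(1),...,π(r) and π(r) is the largest value among π(1),...,π(r). -/

import Mathlib

/-- The lexicographically first increasing (I-II-III) pattern of `π` occurs at
positions `a < b < c` (0-indexed elements of `Fin n`). -/
def FirstIncTripleAt (n : ℕ) (π : Equiv.Perm (Fin n)) (a b c : Fin n) : Prop :=
  a < b ∧ b < c ∧ π a < π b ∧ π b < π c ∧
  ∀ d e f : Fin n, d < e → e < f →
    (d < a ∨ (d = a ∧ (e < b ∨ (e = b ∧ f < c)))) →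
    ¬ (π d < π e ∧ π e < π f)

/-! When `a` is the least position and `b` its successor, every triple lexicographically before
`(a, b, c)` has the form `(a, b, f)` with `f < c`, so only the positions strictly between `b`
and `c` matter; the conditions on `π(1), …, π(r)` are then a repackaging of this. -/

section

variable {ι α : Type*} [LinearOrder ι] [LinearOrder α] {f : ι → α} {a b c : ι}

theorem forall_lt_ne_lt_iff_of_isBot_of_covBy (ha : IsBot a) (hab : a ⋖ b) (hac : a < c) :
    (∀ i < c, i ≠ b → f i < f b) ↔ f a < f b ∧ ∀ i, b < i → i < c → f i < f b := by
  refine ⟨fun h ↦ ⟨h a hac hab.lt.ne, fun i hbi hic ↦ h i hic hbi.ne'⟩,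
    fun ⟨hfab, h⟩ i hic hib ↦ ?_⟩
  rcases (ha i).eq_or_lt with rfl | hai
  · exact hfab
  · exact h i ((hab.ge_of_gt hai).lt_of_ne' hib) hic

theorem forall_lt_lt_iff_of_forall_lt_ne_lt (hbc : b < c) (h : ∀ i < c, i ≠ b → f i < f b) :
    (∀ i < c, f i < f c) ↔ f b < f c := by
  refine ⟨fun hc ↦ hc b hbc, fun hfbc i hic ↦ ?_⟩
  rcases eq_or_ne i b with rfl | hib
  · exact hfbc
  · exact (h i hic hib).trans hfbc

end

theorem firstIncTripleAt_iff_of_isBot_of_covBy {n : ℕ} {π : Equiv.Perm (Fin n)} {a b c : Fin n}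
    (ha : IsBot a) (hab : a ⋖ b) (hbc : b < c) :
    FirstIncTripleAt n π a b c ↔
      (π a < π b ∧ ∀ i, b < i → i < c → π i < π b) ∧ π b < π c := by
  refine ⟨fun ⟨_, _, hπab, hπbc, hfirst⟩ ↦ ⟨⟨hπab, fun i hbi hic ↦ ?_⟩, hπbc⟩,
    fun ⟨⟨hπab, h⟩, hπbc⟩ ↦ ⟨hab.lt, hbc, hπab, hπbc, ?_⟩⟩
  · refine lt_of_le_of_ne (not_lt.1 fun hπbi ↦ ?_) (π.injective.ne hbi.ne')
    exact hfirst a b i hab.lt hbi (.inr ⟨rfl, .inr ⟨rfl, hic⟩⟩) ⟨hπab, hπbi⟩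
  · rintro d e i hde hei (hda | ⟨rfl, heb | ⟨rfl, hic⟩⟩) ⟨-, hπbi⟩
    · exact (ha d).not_gt hda
    · exact hab.2 hde heb
    · exact (h i hei hic).not_gt hπbi

/-- The first increasing triple of `π` is at `{1,2,r}` (positions `0,1,r-1` in `Fin n`)
iff `π(2)` is the second largest and `π(r)` the largest among `π(1),…,π(r)`. -/
theorem stmt_1 (n r : ℕ) (hr3 : 3 ≤ r) (hrn : r ≤ n)
    (π : Equiv.Perm (Fin n)) :
    FirstIncTripleAt n π ⟨0, by omega⟩ ⟨1, by omega⟩ ⟨r - 1, by omega⟩ ↔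
      ((∀ i : Fin n, i < ⟨r - 1, by omega⟩ → i ≠ ⟨1, by omega⟩ → π i < π ⟨1, by omega⟩) ∧
       (∀ i : Fin n, i < ⟨r - 1, by omega⟩ → π i < π ⟨r - 1, by omega⟩)) := by
  have h0 : IsBot (⟨0, by omega⟩ : Fin n) := fun i ↦ Fin.mk_le_of_le_val i.val.zero_le
  have h01 : (⟨0, by omega⟩ : Fin n) ⋖ ⟨1, by omega⟩ := Fin.covBy_iff.2 (Order.covBy_add_one 0)
  have h1r : (⟨1, by omega⟩ : Fin n) < ⟨r - 1, by omega⟩ := Fin.mk_lt_mk.2 (by omega)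
  rw [firstIncTripleAt_iff_of_isBot_of_covBy h0 h01 h1r,
    ← forall_lt_ne_lt_iff_of_isBot_of_covBy h0 h01 (h01.lt.trans h1r)]
  exact and_congr_right fun h ↦ (forall_lt_lt_iff_of_forall_lt_ne_lt h1r h).symm
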